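/- arXiv:1010.1107 — 2 statements merged into one kernel-verified Lean document; each statement's English description precedes it below -/
import Mathlib

section
/- Let H, L > 0 with H² > (18/7)L². Then min( min over μ∈ℤ of (4π²/H²)(6μ+7/2)², min over {(k,l,m)∈ℤ³ : l ≥ 1, 0 ≤ m ≤ l-1} of (4π²/H²)(k+1/2)² + 4π²l²/L² + (4π²/(3L²))(2l-m)² ) = 25π²/H². -/
open Real

/-- For H, L > 0 with H² > (18/7)L², the minimum of the two spectral
families of the Bieberbach manifold G₅\ℝ³ (spin structure δ₁ = 1) is 25π²/H². -/
theorem bieberbach_G5_min (H L : ℝ) (hH : 0 < H) (hL : 0 < L)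
    (hHL : (18/7)*L^2 < H^2) :
    IsLeast {x : ℝ |
      (∃ μ : ℤ, x = (4*π^2/H^2)*(6*(μ:ℝ)+7/2)^2) ∨
      (∃ k l m : ℤ, 1 ≤ l ∧ 0 ≤ m ∧ m ≤ l - 1 ∧
        x = (4*π^2/H^2)*((k:ℝ)+1/2)^2 + 4*π^2*(l:ℝ)^2/L^2
            + (4*π^2/(3*L^2))*(2*(l:ℝ) - (m:ℝ))^2)}
      (25*π^2/H^2) := by
  have hπ : (0:ℝ) < π ^ 2 := by positivity
  have hH2 : (0:ℝ) < H ^ 2 := by positivity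
  have hL2 : (0:ℝ) < L ^ 2 := by positivity
  constructor
  · left
    exact ⟨-1, by push_cast; ring⟩
  · rintro x (⟨μ, rfl⟩ | ⟨k, l, m, hl, hm0, hml, rfl⟩)
    · have h : (25:ℝ)/4 ≤ (6*(μ:ℝ)+7/2)^2 := by
        rcases le_or_gt 0 μ with h | h
        · have h' : (0:ℝ) ≤ (μ:ℝ) := by exact_mod_cast h
          nlinarith
        · have hμ : μ ≤ -1 := by omega
          have h' : (μ:ℝ) ≤ -1 := by exact_mod_cast hμ
          nlinarith
      have heq : 25*π^2/H^2 = (4*π^2/H^2)*(25/4) := by ring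
      rw [heq]
      exact mul_le_mul_of_nonneg_left h (by positivity)
    · have hk : (1:ℝ)/4 ≤ ((k:ℝ)+1/2)^2 := by
        rcases le_or_gt 0 k with h | h
        · have h' : (0:ℝ) ≤ (k:ℝ) := by exact_mod_cast h
          nlinarith
        · have hk' : k ≤ -1 := by omega
          have h' : (k:ℝ) ≤ -1 := by exact_mod_cast hk'
          nlinarith
      have hl' : (1:ℝ) ≤ (l:ℝ) := by exact_mod_cast hl
      have hm0' : (0:ℝ) ≤ (m:ℝ) := by exact_mod_cast hm0
      have hml' : (m:ℝ) ≤ (l:ℝ) - 1 := by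
        have h1 : ((m:ℝ)) ≤ ((l - 1 : ℤ) : ℝ) := by exact_mod_cast hml
        push_cast at h1; linarith
      have hl2 : (1:ℝ) ≤ (l:ℝ)^2 := by nlinarith
      have h2lm : (2:ℝ) ≤ 2*(l:ℝ) - (m:ℝ) := by linarith
      have hsq : (4:ℝ) ≤ (2*(l:ℝ) - (m:ℝ))^2 := by nlinarith
      have step1 : π^2/H^2 + 4*π^2/L^2 + (4*π^2/(3*L^2))*4 ≤
          (4*π^2/H^2)*((k:ℝ)+1/2)^2 + 4*π^2*(l:ℝ)^2/L^2
            + (4*π^2/(3*L^2))*(2*(l:ℝ) - (m:ℝ))^2 := by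
        have t1 : π^2/H^2 ≤ (4*π^2/H^2)*((k:ℝ)+1/2)^2 := by
          have : (4*π^2/H^2)*(1/4) ≤ (4*π^2/H^2)*((k:ℝ)+1/2)^2 :=
            mul_le_mul_of_nonneg_left hk (by positivity)
          have e : 4*π^2/H^2*(1/4) = π^2/H^2 := by ring
          linarith
        have t2 : 4*π^2/L^2 ≤ 4*π^2*(l:ℝ)^2/L^2 := by
          rw [div_le_div_iff₀ hL2 hL2]
          nlinarith [mul_nonneg (mul_nonneg hπ.le hL2.le) (by linarith : (0:ℝ) ≤ (l:ℝ)^2 - 1)]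
        have t3 : (4*π^2/(3*L^2))*4 ≤ (4*π^2/(3*L^2))*(2*(l:ℝ) - (m:ℝ))^2 :=
          mul_le_mul_of_nonneg_left hsq (by positivity)
        linarith
      have step2 : 25*π^2/H^2 ≤ π^2/H^2 + 4*π^2/L^2 + (4*π^2/(3*L^2))*4 := by
        have key : 24*π^2/H^2 ≤ 28*π^2/(3*L^2) := by
          rw [div_le_div_iff₀ hH2 (by positivity)]
          nlinarith [mul_pos hπ (by linarith : (0:ℝ) < H^2 - 18/7*L^2)]
        have e1 : 4*π^2/L^2 + (4*π^2/(3*L^2))*4 = 28*π^2/(3*L^2) := by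
          field_simp; ring
        have e2 : 25*π^2/H^2 = π^2/H^2 + 24*π^2/H^2 := by ring
        linarith [key, e1 ▸ key]
      linarith
end

section
/- Suppose ψ is a section of a Hermitian bundle with metric connection ∇^M over a Riemannian 3-manifold satisfying ∇^M_ξ ψ = (α + b/2) ξ·ψ, ∇^M_{e₁} ψ = β e₂·ψ - (b/2) e₁·ψ, ∇^M_{e₂} ψ = -β e₁·ψ - (b/2) e₂·ψ in a local orthonormal frame {ξ, e₁, e₂}, with |ψ| ≡ 1 nowhere zero. Then the tensor E^ψ(X,Y) := Re⟨Y·∇^M_X ψ, ψ/|ψ|²⟩ equals E^ψ = -(b/2 + α) ξ^♭⊗ξ^♭ + (b/2)(e₁^♭⊗e₁^♭ + e₂^♭⊗e₂^♭) - β(e₁^♭⊗e₂^♭ - e₂^♭⊗e₁^♭), and ψ satisfies ∇^M_X ψ = -E^ψ(X)·ψ for all X. -/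
/-! The prescribed covariant derivative has the form `∇_X ψ = A(X)·ψ` for the endomorphism `A` of
`T` sending `ξ, e₁, e₂` to `(α + b/2) ξ`, `β e₂ - (b/2) e₁`, `-β e₁ - (b/2) e₂`. For a unit spinor,
skew-adjointness and the Clifford relation give `Re⟨Y·X·ψ, ψ⟩ = -⟨X, Y⟩`, so `E^ψ(X, Y) = -⟨A X, Y⟩`:
expanding `A` in the frame gives the formula for `E^ψ`, and expanding `A X` in the frame gives
`∇_X ψ = -E^ψ(X)·ψ`. -/

open RealInnerProductSpace

/-- Skew-adjointness makes `⟪X·Y·ψ, ψ⟫` the conjugate of `⟪Y·X·ψ, ψ⟫`, so the Clifford relation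
computes twice their common real part. -/
theorem re_inner_clifford_clifford_self {T V : Type*}
    [NormedAddCommGroup T] [InnerProductSpace ℝ T] [NormedAddCommGroup V] [InnerProductSpace ℂ V]
    (c : T →ₗ[ℝ] V →ₗ[ℂ] V)
    (hskew : ∀ (X : T) (φ1 φ2 : V), inner ℂ (c X φ1) φ2 = -inner ℂ φ1 (c X φ2))
    (hcliff : ∀ (X Y : T) (φ : V), c X (c Y φ) + c Y (c X φ) = ((-2 * ⟪X, Y⟫ : ℝ) : ℂ) • φ)
    (X Y : T) (ψ : V) :
    (inner ℂ (c Y (c X ψ)) ψ).re = -⟪X, Y⟫ * ‖ψ‖ ^ 2 := by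
  have hconj : inner ℂ (c X (c Y ψ)) ψ = starRingEnd ℂ (inner ℂ (c Y (c X ψ)) ψ) := by
    rw [hskew X, hskew Y, neg_neg, inner_conj_symm]
  have hsum := congrArg (fun φ => (inner ℂ φ ψ).re) (hcliff X Y ψ)
  simp only [inner_add_left, Complex.add_re, hconj, Complex.conj_re, inner_smul_left,
    Complex.conj_ofReal, Complex.re_ofReal_mul] at hsum
  rw [show (inner ℂ ψ ψ).re = ‖ψ‖ ^ 2 from inner_self_eq_norm_sq (𝕜 := ℂ) ψ] at hsum
  linarith

theorem OrthonormalBasis.inner_constr_apply {ι T : Type*} [Fintype ι]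
    [NormedAddCommGroup T] [InnerProductSpace ℝ T] (b : OrthonormalBasis ι ℝ T) (w : ι → T)
    (X Y : T) : ⟪b.toBasis.constr ℝ w X, Y⟫ = ∑ i, ⟪b i, X⟫ * ⟪w i, Y⟫ := by
  conv_lhs => rw [← b.sum_repr' X]
  simp only [map_sum, map_smul, ← b.coe_toBasis, Module.Basis.constr_basis, sum_inner,
    real_inner_smul_left]

/-- For a unit section ψ with
∇_ξψ = (α+b/2)ξ·ψ, ∇_{e₁}ψ = β e₂·ψ - (b/2)e₁·ψ, ∇_{e₂}ψ = -β e₁·ψ - (b/2)e₂·ψ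
in an orthonormal frame {ξ,e₁,e₂}, the energy-momentum tensor
E^ψ(X,Y) = Re⟨Y·∇_Xψ, ψ/|ψ|²⟩ equals
-(b/2+α) ξ^♭⊗ξ^♭ + (b/2)(e₁^♭⊗e₁^♭+e₂^♭⊗e₂^♭) - β(e₁^♭⊗e₂^♭-e₂^♭⊗e₁^♭),
and ψ satisfies ∇_Xψ = -E^ψ(X)·ψ for all X. -/
theorem energy_momentum_three_dim {T V : Type*}
    [NormedAddCommGroup T] [InnerProductSpace ℝ T]
    [NormedAddCommGroup V] [InnerProductSpace ℂ V]
    (c : T →ₗ[ℝ] V →ₗ[ℂ] V)    -- Clifford multiplication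
    (ξ e1 e2 : T)
    (hframe : Orthonormal ℝ ![ξ, e1, e2])
    (hspan : Submodule.span ℝ {ξ, e1, e2} = ⊤)
    (hskew : ∀ (X : T) (φ1 φ2 : V), (inner ℂ (c X φ1) φ2 : ℂ) = - inner ℂ φ1 (c X φ2))
    (hcliff : ∀ (X Y : T) (φ : V),
      c X (c Y φ) + c Y (c X φ) = ((-2 * ⟪X, Y⟫ : ℝ) : ℂ) • φ)
    (α β b : ℝ) (ψ : V) (hψ : ‖ψ‖ = 1)
    (Dψ : T →ₗ[ℝ] V)            -- X ↦ ∇^M_X ψ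
    (hDξ : Dψ ξ = ((α + b/2 : ℝ) : ℂ) • c ξ ψ)
    (hD1 : Dψ e1 = (β : ℂ) • c e2 ψ - ((b/2 : ℝ) : ℂ) • c e1 ψ)
    (hD2 : Dψ e2 = -(β : ℂ) • c e1 ψ - ((b/2 : ℝ) : ℂ) • c e2 ψ)
    (E : T → T → ℝ)
    (hE : ∀ X Y, E X Y = (inner ℂ (c Y (Dψ X)) ψ : ℂ).re) :
    (∀ X Y, E X Y =
      -(b/2 + α) * ⟪ξ, X⟫ * ⟪ξ, Y⟫
      + (b/2) * (⟪e1, X⟫ * ⟪e1, Y⟫ + ⟪e2, X⟫ * ⟪e2, Y⟫)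
      - β * (⟪e1, X⟫ * ⟪e2, Y⟫ - ⟪e2, X⟫ * ⟪e1, Y⟫)) ∧
    (∀ X, Dψ X = - c (E X ξ • ξ + E X e1 • e1 + E X e2 • e2) ψ) := by
  let frame := OrthonormalBasis.mk hframe
    (hspan.ge.trans (Submodule.span_mono (by simp [Set.insert_subset_iff])))
  have hframe_apply : ⇑frame = ![ξ, e1, e2] := OrthonormalBasis.coe_mk _ _
  let A := frame.toBasis.constr ℝ ![(α + b/2) • ξ, β • e2 - (b/2) • e1, -β • e1 - (b/2) • e2]
  have hDA : Dψ = (c.flip ψ).comp A := frame.toBasis.ext fun i => by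
    rw [LinearMap.comp_apply, Module.Basis.constr_basis, LinearMap.flip_apply,
      frame.coe_toBasis, hframe_apply]
    fin_cases i <;> simp [hDξ, hD1, hD2, Complex.coe_smul, -Complex.ofReal_div, -Complex.ofReal_add]
  have hEA : ∀ X Y, E X Y = -⟪A X, Y⟫ := fun X Y => by
    rw [hE, hDA, LinearMap.comp_apply, LinearMap.flip_apply,
      re_inner_clifford_clifford_self c hskew hcliff, hψ, one_pow, mul_one]
  refine ⟨fun X Y => ?_, fun X => ?_⟩
  · simp only [hEA, A, frame.inner_constr_apply, Fin.sum_univ_three, hframe_apply,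
      Matrix.cons_val_zero, Matrix.cons_val_one, Matrix.cons_val, real_inner_smul_left,
      inner_sub_left, inner_neg_left, neg_smul]
    ring
  · have hAX : A X = -(E X ξ • ξ + E X e1 • e1 + E X e2 • e2) := by
      have h := frame.sum_repr' (A X)
      simp only [Fin.sum_univ_three, hframe_apply] at h
      simp only [hEA, neg_smul, neg_add, neg_neg, ← real_inner_comm (A X)]
      exact h.symm
    rw [hDA, LinearMap.comp_apply, LinearMap.flip_apply, hAX, map_neg, LinearMap.neg_apply]
end
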